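/- Let D be a connected finite graph and (F,G) an elementary pair of maximal nested sets on D (i.e. |F \ G| = 1 = |G \ F|). Let B be the unique unsaturated element of F ∩ G, and let B_1, B_2 be the unique elements of F\G and G\F respectively. Then: (1) the vertices α^B_F and α^B_G are distinct, and the set of vertices of B not covered by the maximal elements of F∩G inside B is exactly {α^B_F, α^B_G}; (2) B_1 is the connected component of B \ {α^B_F} containing α^B_G, and B_2 is the connected component of B \ {α^B_G} containing α^B_F; (3) B_1 and B_2 are not compatible and B_1 ∪ B_2 = B. -/

import Mathlib

open scoped Classical

section NestedSets

variable {V : Type*} [Fintype V] [DecidableEq V]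

/-- The (induced subgraph on the) finite vertex set `B` is connected (in particular nonempty). -/
def Conn (G : SimpleGraph V) (B : Finset V) : Prop :=
  (G.induce (B : Set V)).Connected

/-- Two vertex sets are orthogonal: no edge of `G` joins a vertex of one to a vertex
of the other. -/
def Orth (G : SimpleGraph V) (B C : Finset V) : Prop :=
  ∀ a ∈ B, ∀ b ∈ C, ¬ G.Adj a b

/-- Two subdiagrams are compatible if one contains the other or they are orthogonal. -/
def Compat (G : SimpleGraph V) (B C : Finset V) : Prop :=
  B ⊆ C ∨ C ⊆ B ∨ Orth G B C

/-- A nested set on the (connected) diagram `D` with vertex set `V`: a collection of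
pairwise compatible connected subdiagrams containing `D` itself. -/
def Nested (G : SimpleGraph V) (H : Finset (Finset V)) : Prop :=
  Finset.univ ∈ H ∧ (∀ B ∈ H, Conn G B) ∧ ∀ B ∈ H, ∀ C ∈ H, Compat G B C

/-- `iN H B` is the union of the elements of `H` strictly contained in `B`;
this coincides with the union of the *maximal* elements of `H` strictly contained in `B`. -/
noncomputable def iN (H : Finset (Finset V)) (B : Finset V) : Finset V :=
  (H.filter fun C => C ⊂ B).sup id

/-- `nN H B = n(B;H)` is the number of vertices of `B` not covered by the maximal
elements of `H` strictly contained in `B`. -/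
noncomputable def nN (H : Finset (Finset V)) (B : Finset V) : ℕ :=
  (B \ iN H B).card

/-- `C` is a connected component of (the induced subgraph on) `S`. -/
def IsCC (G : SimpleGraph V) (S C : Finset V) : Prop :=
  C ⊆ S ∧ Conn G C ∧ ∀ C', C ⊆ C' → C' ⊆ S → Conn G C' → C' = C

/-- A maximal nested set on `D`. -/
def MaxNested (G : SimpleGraph V) (F : Finset (Finset V)) : Prop :=
  Nested G F ∧ ∀ K, Nested G K → F ⊆ K → K = F

end NestedSets

/-!
If `a` is the vertex of `B ∈ F` left uncovered by a maximal nested set `F`, every connected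
component of `B ∖ {a}` is compatible with all of `F` and hence belongs to `F`. For the elementary
pair, the components of `B ∖ {a₁}` therefore lie in `F`, and all except `B₁` lie in `Gs` too, so
only `B₁` can contain `a₂`, the vertex left uncovered by `Gs`; symmetrically for `B₂`. A second
uncovered vertex `x ≠ a₁, a₂` of `F ∩ Gs` would lie in `B₁` beside `a₂` as an uncovered vertex of
`B₁ ∈ F`, and a vertex of `B` outside `B₁ ∪ B₂` would have the same component in `B ∖ {a₁}` and
`B ∖ {a₂}`, which is impossible in the connected set `B`.
-/

open Finset

section Components

variable {V : Type*} {G : SimpleGraph V}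

lemma conn_singleton (v : V) : Conn G {v} := by
  rw [Conn, coe_singleton, SimpleGraph.induce_singleton_eq_top]
  exact SimpleGraph.connected_top

lemma Conn.exists_adj_mem_notMem {B M : Finset V} (hB : Conn G B) {x y : V}
    (hx : x ∈ B) (hy : y ∈ B) (hxM : x ∈ M) (hyM : y ∉ M) :
    ∃ p ∈ B, ∃ q ∈ B, p ∈ M ∧ q ∉ M ∧ G.Adj p q := by
  obtain ⟨w⟩ := hB.preconnected ⟨x, hx⟩ ⟨y, hy⟩
  obtain ⟨d, -, hp, hq⟩ := w.exists_boundary_dart {u | (u : V) ∈ M} hxM hyM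
  exact ⟨d.fst, d.fst.2, d.snd, d.snd.2, hp, hq, d.adj⟩

lemma Compat.symm {B C : Finset V} (h : Compat G B C) : Compat G C B := by
  rcases h with h | h | h
  · exact .inr (.inl h)
  · exact .inl h
  · exact .inr (.inr fun a ha b hb hab => h b hb a ha hab.symm)

variable [DecidableEq V]

lemma Conn.union {A C : Finset V} (hA : Conn G A) (hC : Conn G C) (h : (A ∩ C).Nonempty) :
    Conn G (A ∪ C) := by
  unfold Conn
  rw [coe_union]
  exact SimpleGraph.induce_union_connected hA.preconnected hC.preconnected (by exact_mod_cast h)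

lemma Conn.union_of_adj {A C : Finset V} (hA : Conn G A) (hC : Conn G C) {p q : V}
    (hp : p ∈ A) (hq : q ∈ C) (hpq : G.Adj p q) : Conn G (A ∪ C) := by
  unfold Conn
  rw [coe_union]
  exact SimpleGraph.connected_induce_union hA.preconnected hC.preconnected hp hq hpq

lemma Conn.insert_of_adj {C : Finset V} (hC : Conn G C) {p q : V} (hp : p ∈ C)
    (hpq : G.Adj p q) : Conn G (insert q C) := by
  rw [insert_eq]
  exact (conn_singleton q).union_of_adj hC (mem_singleton_self q) hp hpq.symm

lemma exists_isCC_of_mem {S : Finset V} {v : V} (hv : v ∈ S) : ∃ M, IsCC G S M ∧ v ∈ M := by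
  obtain ⟨M, hM, hmax⟩ := exists_max_image
    (S.powerset.filter fun X => v ∈ X ∧ Conn G X) card
    ⟨{v}, by simp [hv, conn_singleton]⟩
  simp only [mem_filter, mem_powerset] at hM hmax
  refine ⟨M, ⟨hM.1, hM.2.2, fun C hMC hCS hC => ?_⟩, hM.2.1⟩
  exact (eq_of_subset_of_card_le hMC (hmax C ⟨hCS, hMC hM.2.1, hC⟩)).symm

namespace IsCC

variable {S M : Finset V}

lemma mem_of_adj (hM : IsCC G S M) {p q : V} (hp : p ∈ M) (hq : q ∈ S) (hpq : G.Adj p q) :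
    q ∈ M := by
  rw [← hM.2.2 _ (subset_insert q M) (insert_subset hq hM.1) (hM.2.1.insert_of_adj hp hpq)]
  exact mem_insert_self q M

lemma subset_of_conn (hM : IsCC G S M) {C : Finset V} (hC : Conn G C) (hCS : C ⊆ S)
    (hCM : (C ∩ M).Nonempty) : C ⊆ M := by
  rw [← hM.2.2 _ subset_union_right (union_subset hCS hM.1) (hC.union hM.2.1 hCM)]
  exact subset_union_left

lemma notMem_of_erase {B : Finset V} {a : V} (hM : IsCC G (B.erase a) M) : a ∉ M :=
  fun h => notMem_erase a B (hM.1 h)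

lemma ssubset_of_erase {B : Finset V} {a : V} (hM : IsCC G (B.erase a) M) (ha : a ∈ B) :
    M ⊂ B :=
  ssubset_of_subset_of_ne (hM.1.trans (erase_subset a B)) fun h => hM.notMem_of_erase (h ▸ ha)

lemma not_isCC_erase_of_ne {B : Finset V} {a a' : V} (hB : Conn G B) (ha : a ∈ B)
    (hne : a ≠ a') (hM : IsCC G (B.erase a) M) : ¬ IsCC G (B.erase a') M := by
  intro hM'
  obtain ⟨⟨x, hx⟩⟩ := hM.2.1.nonempty
  obtain ⟨p, -, q, hq, hpM, hqM, hpq⟩ :=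
    hB.exists_adj_mem_notMem (mem_erase.1 (hM.1 hx)).2 ha hx hM.notMem_of_erase
  rcases eq_or_ne q a with rfl | hqa
  · exact hqM (hM'.mem_of_adj hpM (mem_erase.2 ⟨hne, hq⟩) hpq)
  · exact hqM (hM.mem_of_adj hpM (mem_erase.2 ⟨hqa, hq⟩) hpq)

lemma mem_or_mem_of_erase {B M' : Finset V} {a a' v : V} (hB : Conn G B) (ha : a ∈ B)
    (hne : a ≠ a') (hM : IsCC G (B.erase a) M) (hM' : IsCC G (B.erase a') M') (hvM : v ∈ M)
    (hvM' : v ∈ M') : a' ∈ M ∨ a ∈ M' := by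
  by_contra! h
  have hMM' : M ⊆ M' := hM'.subset_of_conn hM.2.1
    (subset_erase.2 ⟨hM.1.trans (erase_subset a B), h.1⟩) ⟨v, mem_inter.2 ⟨hvM, hvM'⟩⟩
  have hM'M : M' ⊆ M := hM.subset_of_conn hM'.2.1
    (subset_erase.2 ⟨hM'.1.trans (erase_subset a' B), h.2⟩) ⟨v, mem_inter.2 ⟨hvM', hvM⟩⟩
  exact hM.not_isCC_erase_of_ne hB ha hne (Subset.antisymm hMM' hM'M ▸ hM')

end IsCC

lemma not_compat_of_union_eq {B B₁ B₂ : Finset V} (hB : Conn G B) (hU : B₁ ∪ B₂ = B)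
    {a₁ a₂ : V} (ha₂B₁ : a₂ ∈ B₁) (ha₁B₁ : a₁ ∉ B₁) (ha₁B₂ : a₁ ∈ B₂) (ha₂B₂ : a₂ ∉ B₂) :
    ¬ Compat G B₁ B₂ := by
  rintro (h | h | h)
  · exact ha₂B₂ (h ha₂B₁)
  · exact ha₁B₁ (h ha₁B₂)
  · have hmem : ∀ {x}, x ∈ B ↔ x ∈ B₁ ∨ x ∈ B₂ := by simp [← hU]
    obtain ⟨p, -, q, hq, hp₁, hq₁, hpq⟩ :=
      hB.exists_adj_mem_notMem (hmem.2 (.inl ha₂B₁)) (hmem.2 (.inr ha₁B₂)) ha₂B₁ ha₁B₁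
    exact h p hp₁ q ((hmem.1 hq).resolve_left hq₁) hpq

end Components

section MaximalNestedSets

variable {V : Type*} [DecidableEq V] {G : SimpleGraph V}

lemma mem_iN {H : Finset (Finset V)} {B : Finset V} {x : V} :
    x ∈ iN H B ↔ ∃ C ∈ H, C ⊂ B ∧ x ∈ C := by
  simp only [iN, mem_sup, mem_filter, id, and_assoc]

lemma subset_iN {H : Finset (Finset V)} {B C : Finset V} (hC : C ∈ H) (h : C ⊂ B) :
    C ⊆ iN H B := fun _ hx => mem_iN.2 ⟨C, hC, h, hx⟩

lemma iN_mono {H H' : Finset (Finset V)} (h : H ⊆ H') (B : Finset V) : iN H B ⊆ iN H' B :=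
  fun _ hx => by
    obtain ⟨C, hC, hCB, hxC⟩ := mem_iN.1 hx
    exact mem_iN.2 ⟨C, h hC, hCB, hxC⟩

lemma sdiff_iN_anti {H H' : Finset (Finset V)} (h : H ⊆ H') (B : Finset V) :
    B \ iN H' B ⊆ B \ iN H B :=
  sdiff_subset_sdiff subset_rfl (iN_mono h B)

variable [Fintype V]

namespace MaxNested

variable {F : Finset (Finset V)}

lemma mem_of_compat (hF : MaxNested G F) {C : Finset V} (hC : Conn G C)
    (h : ∀ A ∈ F, Compat G A C) : C ∈ F := by
  have hnest : Nested G (insert C F) := by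
    refine ⟨mem_insert_of_mem hF.1.1, ?_, ?_⟩
    · simpa [hC] using hF.1.2.1
    · simp only [mem_insert, forall_eq_or_imp]
      exact ⟨⟨.inl subset_rfl, fun A hA => (h A hA).symm⟩,
        fun A hA => ⟨h A hA, hF.1.2.2 A hA⟩⟩
  rw [← hF.2 _ hnest (subset_insert C F)]
  exact mem_insert_self C F

lemma mem_of_isCC_erase (hF : MaxNested G F) {C D : Finset V} (hC : C ∈ F) {a : V}
    (ha : a ∈ C \ iN F C) (hD : IsCC G (C.erase a) D) : D ∈ F := by
  have hDC : D ⊆ C := hD.1.trans (erase_subset a C)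
  refine hF.mem_of_compat hD.2.1 fun A hA => ?_
  rcases hF.1.2.2 A hA C hC with hAC | hCA | hAC
  · rcases eq_or_ne A C with rfl | hne
    · exact .inr (.inl hDC)
    by_cases hAD : Orth G A D
    · exact .inr (.inr hAD)
    have hAC' : A ⊆ C.erase a := fun x hx => mem_erase.2
      ⟨fun h => (mem_sdiff.1 ha).2 (subset_iN hA (ssubset_of_subset_of_ne hAC hne) (h ▸ hx)),
        hAC hx⟩
    simp only [Orth, not_forall, not_not] at hAD
    obtain ⟨p, hp, q, hq, hpq⟩ := hAD
    exact .inl (hD.subset_of_conn (hF.1.2.1 A hA) hAC'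
      ⟨p, mem_inter.2 ⟨hp, hD.mem_of_adj hq (hAC' hp) hpq.symm⟩⟩)
  · exact .inr (.inl (hDC.trans hCA))
  · exact .inr (.inr fun p hp q hq => hAC p hp q (hDC hq))

lemma eq_of_mem_sdiff_iN (hF : MaxNested G F) {C : Finset V} (hC : C ∈ F) {b b' : V}
    (hb : b ∈ C \ iN F C) (hb' : b' ∈ C \ iN F C) : b = b' := by
  by_contra hne
  obtain ⟨hb'C, hb'F⟩ := mem_sdiff.1 hb'
  obtain ⟨M, hM, hb'M⟩ := exists_isCC_of_mem (G := G) (mem_erase.2 ⟨Ne.symm hne, hb'C⟩)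
  exact hb'F (subset_iN (hF.mem_of_isCC_erase hC hb hM)
    (hM.ssubset_of_erase (mem_sdiff.1 hb).1) hb'M)

end MaxNested

lemma ne_of_two_le_nN {F Gs : Finset (Finset V)} (hF : MaxNested G F) (hGs : MaxNested G Gs)
    {B : Finset V} (hB : B ∈ F ∩ Gs) (hBu : 2 ≤ nN (F ∩ Gs) B) {a₁ a₂ : V}
    (ha₁ : a₁ ∈ B \ iN F B) (ha₂ : a₂ ∈ B \ iN Gs B) : a₁ ≠ a₂ := by
  rintro rfl
  obtain ⟨z, hz, hza⟩ := exists_mem_ne hBu a₁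
  obtain ⟨hzB, hzK⟩ := mem_sdiff.1 hz
  obtain ⟨M, hM, hzM⟩ := exists_isCC_of_mem (G := G) (mem_erase.2 ⟨hza, hzB⟩)
  have hMK : M ∈ F ∩ Gs := mem_inter.2
    ⟨hF.mem_of_isCC_erase (mem_inter.1 hB).1 ha₁ hM,
      hGs.mem_of_isCC_erase (mem_inter.1 hB).2 ha₂ hM⟩
  exact hzK (subset_iN hMK (hM.ssubset_of_erase (mem_sdiff.1 ha₁).1) hzM)

end MaximalNestedSets

section ElementaryPair

variable {V : Type*} [DecidableEq V] {G : SimpleGraph V}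
  {F Gs : Finset (Finset V)} {B₁ B : Finset V}

lemma mem_of_sdiff_eq_singleton (hFG : F \ Gs = {B₁}) {C : Finset V} (hC : C ∈ F)
    (hne : C ≠ B₁) : C ∈ Gs := by
  by_contra h
  exact hne (mem_singleton.1 (hFG ▸ mem_sdiff.2 ⟨hC, h⟩))

lemma mem_of_mem_sdiff_iN_inter (hFG : F \ Gs = {B₁}) {a₁ x : V} (ha₁ : B \ iN F B = {a₁})
    (hx : x ∈ B \ iN (F ∩ Gs) B) (hxa : x ≠ a₁) : x ∈ B₁ ∧ B₁ ⊂ B := by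
  obtain ⟨hxB, hxK⟩ := mem_sdiff.1 hx
  have hxF : x ∈ iN F B := by
    by_contra h
    exact hxa (mem_singleton.1 (ha₁ ▸ mem_sdiff.2 ⟨hxB, h⟩))
  obtain ⟨C, hCF, hCB, hxC⟩ := mem_iN.1 hxF
  obtain rfl : C = B₁ := by
    by_contra hne
    exact hxK (subset_iN (mem_inter.2 ⟨hCF, mem_of_sdiff_eq_singleton hFG hCF hne⟩) hCB hxC)
  exact ⟨hxC, hCB⟩

lemma iN_subset_iN_inter (hFG : F \ Gs = {B₁}) (hB₁B : B₁ ⊂ B) :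
    iN F B₁ ⊆ iN (F ∩ Gs) B := fun y hy => by
  obtain ⟨A, hAF, hAB₁, hyA⟩ := mem_iN.1 hy
  exact subset_iN (mem_inter.2 ⟨hAF, mem_of_sdiff_eq_singleton hFG hAF hAB₁.ne⟩)
    (hAB₁.trans hB₁B) hyA

variable [Fintype V]

lemma notMem_of_isCC_erase (hF : MaxNested G F) (hFG : F \ Gs = {B₁}) (hB : B ∈ F ∩ Gs)
    {a₁ a₂ : V} (ha₁ : a₁ ∈ B \ iN F B) (ha₂ : a₂ ∉ iN Gs B) {M : Finset V}
    (hM : IsCC G (B.erase a₁) M) (hne : M ≠ B₁) : a₂ ∉ M := fun h =>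
  ha₂ (subset_iN
    (mem_of_sdiff_eq_singleton hFG (hF.mem_of_isCC_erase (mem_inter.1 hB).1 ha₁ hM) hne)
    (hM.ssubset_of_erase (mem_sdiff.1 ha₁).1) h)

lemma isCC_erase_of_sdiff_eq_singleton (hF : MaxNested G F) (hFG : F \ Gs = {B₁})
    (hB : B ∈ F ∩ Gs) {a₁ a₂ : V} (ha₁ : B \ iN F B = {a₁}) (ha₂ : a₂ ∈ B \ iN Gs B)
    (hne : a₁ ≠ a₂) : IsCC G (B.erase a₁) B₁ ∧ a₂ ∈ B₁ := by
  obtain ⟨M, hM, ha₂M⟩ :=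
    exists_isCC_of_mem (G := G) (mem_erase.2 ⟨hne.symm, (mem_sdiff.1 ha₂).1⟩)
  obtain rfl : M = B₁ := by
    by_contra h
    exact notMem_of_isCC_erase hF hFG hB (ha₁ ▸ mem_singleton_self a₁) (mem_sdiff.1 ha₂).2
      hM h ha₂M
  exact ⟨hM, ha₂M⟩

lemma sdiff_iN_inter_eq_pair (hF : MaxNested G F) (hFG : F \ Gs = {B₁}) {a₁ a₂ : V}
    (ha₁ : B \ iN F B = {a₁}) (ha₂ : a₂ ∈ B \ iN Gs B) (hne : a₁ ≠ a₂) :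
    B \ iN (F ∩ Gs) B = {a₁, a₂} := by
  have ha₁K : a₁ ∈ B \ iN (F ∩ Gs) B :=
    sdiff_iN_anti inter_subset_left B (ha₁ ▸ mem_singleton_self a₁)
  have ha₂K : a₂ ∈ B \ iN (F ∩ Gs) B := sdiff_iN_anti inter_subset_right B ha₂
  refine Subset.antisymm (fun x hx => ?_) (insert_subset ha₁K (singleton_subset_iff.2 ha₂K))
  rw [mem_insert, mem_singleton, or_iff_not_imp_left]
  intro hxa
  obtain ⟨hxB₁, hB₁B⟩ := mem_of_mem_sdiff_iN_inter hFG ha₁ hx hxa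
  have ha₂B₁ := (mem_of_mem_sdiff_iN_inter hFG ha₁ ha₂K hne.symm).1
  have hcov := iN_subset_iN_inter hFG hB₁B
  exact hF.eq_of_mem_sdiff_iN (mem_sdiff.1 (hFG ▸ mem_singleton_self B₁)).1
    (mem_sdiff.2 ⟨hxB₁, fun h => (mem_sdiff.1 hx).2 (hcov h)⟩)
    (mem_sdiff.2 ⟨ha₂B₁, fun h => (mem_sdiff.1 ha₂K).2 (hcov h)⟩)

lemma union_eq_of_sdiff_eq_singleton (hF : MaxNested G F) (hGs : MaxNested G Gs) {B₂ : Finset V}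
    (hFG : F \ Gs = {B₁}) (hGF : Gs \ F = {B₂}) (hB : B ∈ F ∩ Gs) {a₁ a₂ : V}
    (ha₁ : a₁ ∈ B \ iN F B) (ha₂ : a₂ ∈ B \ iN Gs B) (hne : a₁ ≠ a₂)
    (h₁ : IsCC G (B.erase a₁) B₁) (h₂ : IsCC G (B.erase a₂) B₂) (ha₂B₁ : a₂ ∈ B₁)
    (ha₁B₂ : a₁ ∈ B₂) : B₁ ∪ B₂ = B := by
  have ha₁B := (mem_sdiff.1 ha₁).1
  refine Subset.antisymm (union_subset (h₁.ssubset_of_erase ha₁B).subset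
    (h₂.ssubset_of_erase (mem_sdiff.1 ha₂).1).subset) fun v hv => ?_
  by_contra hvU
  obtain ⟨hv₁, hv₂⟩ := not_or.1 (mem_union.not.1 hvU)
  obtain ⟨M, hM, hvM⟩ := exists_isCC_of_mem (G := G)
    (mem_erase.2 ⟨(ne_of_mem_of_not_mem ha₁B₂ hv₂).symm, hv⟩)
  obtain ⟨M', hM', hvM'⟩ := exists_isCC_of_mem (G := G)
    (mem_erase.2 ⟨(ne_of_mem_of_not_mem ha₂B₁ hv₁).symm, hv⟩)
  have ha₂M : a₂ ∉ M := notMem_of_isCC_erase hF hFG hB ha₁ (mem_sdiff.1 ha₂).2 hM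
    (by rintro rfl; exact hv₁ hvM)
  have ha₁M' : a₁ ∉ M' := notMem_of_isCC_erase hGs hGF (inter_comm F Gs ▸ hB) ha₂
    (mem_sdiff.1 ha₁).2 hM' (by rintro rfl; exact hv₂ hvM')
  exact (hM.mem_or_mem_of_erase (hF.1.2.1 B (mem_inter.1 hB).1) ha₁B hne hM' hvM hvM').elim
    ha₂M ha₁M'

end ElementaryPair

theorem stmt6_general {V : Type*} [Fintype V] [DecidableEq V]
    (Gr : SimpleGraph V)
    (F Gs : Finset (Finset V)) (hF : MaxNested Gr F) (hGs : MaxNested Gr Gs)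
    (B₁ B₂ : Finset V) (hFG : F \ Gs = {B₁}) (hGF : Gs \ F = {B₂})
    (B : Finset V) (hB : B ∈ F ∩ Gs) (hBu : 2 ≤ nN (F ∩ Gs) B)
    (a₁ a₂ : V) (ha₁ : B \ iN F B = {a₁}) (ha₂ : B \ iN Gs B = {a₂}) :
    a₁ ≠ a₂ ∧ B \ iN (F ∩ Gs) B = {a₁, a₂} ∧
    (IsCC Gr (B.erase a₁) B₁ ∧ a₂ ∈ B₁) ∧
    (IsCC Gr (B.erase a₂) B₂ ∧ a₁ ∈ B₂) ∧
    ¬ Compat Gr B₁ B₂ ∧ B₁ ∪ B₂ = B := by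
  have ha₁B : a₁ ∈ B \ iN F B := ha₁ ▸ mem_singleton_self a₁
  have ha₂B : a₂ ∈ B \ iN Gs B := ha₂ ▸ mem_singleton_self a₂
  have hne : a₁ ≠ a₂ := ne_of_two_le_nN hF hGs hB hBu ha₁B ha₂B
  obtain ⟨h₁, ha₂B₁⟩ := isCC_erase_of_sdiff_eq_singleton hF hFG hB ha₁ ha₂B hne
  obtain ⟨h₂, ha₁B₂⟩ :=
    isCC_erase_of_sdiff_eq_singleton hGs hGF (inter_comm F Gs ▸ hB) ha₂ ha₁B hne.symm
  have hU : B₁ ∪ B₂ = B :=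
    union_eq_of_sdiff_eq_singleton hF hGs hFG hGF hB ha₁B ha₂B hne h₁ h₂ ha₂B₁ ha₁B₂
  refine ⟨hne, sdiff_iN_inter_eq_pair hF hFG ha₁ ha₂B hne, ⟨h₁, ha₂B₁⟩, ⟨h₂, ha₁B₂⟩, ?_, hU⟩
  exact not_compat_of_union_eq (hF.1.2.1 B (mem_inter.1 hB).1) hU ha₂B₁ h₁.notMem_of_erase
    ha₁B₂ h₂.notMem_of_erase

/-- Properties of an elementary pair `(F, Gs)` of maximal nested sets:
with `B` the unique unsaturated element of `F ∩ Gs`, `B₁` the unique element of `F \ Gs`,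
`B₂` the unique element of `Gs \ F`, and `a₁ = α^B_F`, `a₂ = α^B_Gs`:
(1) `a₁ ≠ a₂` and the uncovered vertex set of `B` in `F ∩ Gs` is `{a₁, a₂}`;
(2) `B₁` is the connected component of `B \ {a₁}` containing `a₂`, and `B₂` is the
connected component of `B \ {a₂}` containing `a₁`;
(3) `B₁`, `B₂` are not compatible and `B₁ ∪ B₂ = B`. -/
theorem stmt6 {V : Type*} [Fintype V] [DecidableEq V]
    (Gr : SimpleGraph V) (hGr : Gr.Connected)
    (F Gs : Finset (Finset V)) (hF : MaxNested Gr F) (hGs : MaxNested Gr Gs)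
    (B₁ B₂ : Finset V) (hFG : F \ Gs = {B₁}) (hGF : Gs \ F = {B₂})
    (B : Finset V) (hB : B ∈ F ∩ Gs) (hBu : 2 ≤ nN (F ∩ Gs) B)
    (a₁ a₂ : V) (ha₁ : B \ iN F B = {a₁}) (ha₂ : B \ iN Gs B = {a₂}) :
    a₁ ≠ a₂ ∧ B \ iN (F ∩ Gs) B = {a₁, a₂} ∧
    (IsCC Gr (B.erase a₁) B₁ ∧ a₂ ∈ B₁) ∧
    (IsCC Gr (B.erase a₂) B₂ ∧ a₁ ∈ B₂) ∧
    ¬ Compat Gr B₁ B₂ ∧ B₁ ∪ B₂ = B :=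
  stmt6_general Gr F Gs hF hGs B₁ B₂ hFG hGF B hB hBu a₁ a₂ ha₁ ha₂
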